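/- Let y ∈ ℝ^M, A ∈ ℝ^{M×N}, λ > 0, and B ∈ ℝ^{M'×N}. If the matrix AᵀA − λ BᵀB is positive semidefinite, then the cost function F : ℝ^N → ℝ defined by F(x) = (1/2)‖y − A x‖₂² + λ ψ_B(x) is convex on ℝ^N. -/

import Mathlib

/-!
Since `S_B` is an infimum over `v`, the cost is the pointwise supremum over `v` of
`½‖y - Ax‖² - (λ/2)‖B(x - v)‖² + λ‖x‖₁ - λ‖v‖₁`. The quadratic part of each of these functions
is `½ xᵀ(AᵀA - λBᵀB)x`, which is positive semidefinite, so each of them is convex, and hence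
so is their supremum.
-/

open Matrix

/-- The ℓ₁ norm on `ℝ^N`. -/
noncomputable def norm1 {N : ℕ} (v : Fin N → ℝ) : ℝ := ∑ n, |v n|

/-- The squared Euclidean (ℓ₂) norm on `ℝ^M`. -/
def norm2sq {M : ℕ} (u : Fin M → ℝ) : ℝ := ∑ m, (u m) ^ 2

/-- The generalized Huber function
`S_B(x) = inf_v ( ‖v‖₁ + (1/2) ‖B(x - v)‖₂² )`. -/
noncomputable def genHuber {M N : ℕ} (B : Matrix (Fin M) (Fin N) ℝ) (x : Fin N → ℝ) : ℝ :=
  ⨅ v : Fin N → ℝ, (norm1 v + (1 / 2) * norm2sq (B.mulVec (x - v)))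

/-- The generalized MC (GMC) penalty `ψ_B(x) = ‖x‖₁ - S_B(x)`. -/
noncomputable def gmcPenalty {M N : ℕ} (B : Matrix (Fin M) (Fin N) ℝ) (x : Fin N → ℝ) : ℝ :=
  norm1 x - genHuber B x

open Set

lemma norm1_nonneg {N : ℕ} (v : Fin N → ℝ) : 0 ≤ norm1 v :=
  Finset.sum_nonneg fun _ _ => abs_nonneg _

lemma norm2sq_nonneg {M : ℕ} (u : Fin M → ℝ) : 0 ≤ norm2sq u :=
  Finset.sum_nonneg fun _ _ => sq_nonneg _

lemma norm2sq_neg {M : ℕ} (u : Fin M → ℝ) : norm2sq (-u) = norm2sq u := by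
  simp [norm2sq]

lemma norm2sq_convex_combo {M : ℕ} {a b : ℝ} (hab : a + b = 1) (p q : Fin M → ℝ) :
    norm2sq (a • p + b • q) = a * norm2sq p + b * norm2sq q - a * b * norm2sq (p - q) := by
  obtain rfl : b = 1 - a := by linarith
  simp only [norm2sq, Pi.add_apply, Pi.smul_apply, Pi.sub_apply, smul_eq_mul,
    Finset.mul_sum, ← Finset.sum_add_distrib, ← Finset.sum_sub_distrib]
  exact Finset.sum_congr rfl fun m _ => by ring

lemma dotProduct_mulVec_transpose_mul_self {K N : ℕ} (C : Matrix (Fin K) (Fin N) ℝ)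
    (w : Fin N → ℝ) : w ⬝ᵥ (Cᵀ * C) *ᵥ w = norm2sq (C *ᵥ w) := by
  rw [← mulVec_mulVec, dotProduct_mulVec, vecMul_transpose]
  simp [norm2sq, dotProduct, sq]

lemma Matrix.PosSemidef.mul_norm2sq_mulVec_le {M M' N : ℕ} {A : Matrix (Fin M) (Fin N) ℝ}
    {lam : ℝ} {B : Matrix (Fin M') (Fin N) ℝ} (h : (Aᵀ * A - lam • (Bᵀ * B)).PosSemidef)
    (w : Fin N → ℝ) : lam * norm2sq (B *ᵥ w) ≤ norm2sq (A *ᵥ w) := by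
  have := h.dotProduct_mulVec_nonneg w
  simp only [star_trivial, sub_mulVec, smul_mulVec, dotProduct_sub, dotProduct_smul,
    smul_eq_mul, dotProduct_mulVec_transpose_mul_self] at this
  linarith

lemma convexOn_norm1 {N : ℕ} : ConvexOn ℝ univ (norm1 : (Fin N → ℝ) → ℝ) := by
  refine ⟨convex_univ, fun x _ x' _ a b ha hb _ => ?_⟩
  simp only [norm1, Pi.add_apply, Pi.smul_apply, smul_eq_mul, Finset.mul_sum,
    ← Finset.sum_add_distrib]
  refine Finset.sum_le_sum fun n _ => (abs_add_le _ _).trans_eq ?_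
  rw [abs_mul, abs_mul, abs_of_nonneg ha, abs_of_nonneg hb]

lemma convexOn_norm2sq_sub_mul_norm2sq {E : Type*} [AddCommGroup E] [Module ℝ E] {M M' : ℕ}
    (p : E →ᵃ[ℝ] (Fin M → ℝ)) (q : E →ᵃ[ℝ] (Fin M' → ℝ)) {lam : ℝ}
    (h : ∀ w, lam * norm2sq (q.linear w) ≤ norm2sq (p.linear w)) :
    ConvexOn ℝ univ fun x => norm2sq (p x) - lam * norm2sq (q x) := by
  refine ⟨convex_univ, fun x _ x' _ a b ha hb hab => ?_⟩
  have hgap := mul_nonneg (mul_nonneg ha hb) (sub_nonneg.2 (h (x -ᵥ x')))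
  rw [p.linearMap_vsub, q.linearMap_vsub, vsub_eq_sub, vsub_eq_sub] at hgap
  simp only [Convex.combo_affine_apply hab, norm2sq_convex_combo hab, smul_eq_mul]
  linarith

lemma Matrix.PosSemidef.convexOn_norm2sq_sub_mul_norm2sq_mulVec {M M' N : ℕ}
    {A : Matrix (Fin M) (Fin N) ℝ} {lam : ℝ} {B : Matrix (Fin M') (Fin N) ℝ}
    (h : (Aᵀ * A - lam • (Bᵀ * B)).PosSemidef) (y : Fin M → ℝ) (v : Fin N → ℝ) :
    ConvexOn ℝ univ fun x => norm2sq (y - A *ᵥ x) - lam * norm2sq (B *ᵥ (x - v)) := by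
  refine (convexOn_norm2sq_sub_mul_norm2sq
    (A.mulVecLin.toAffineMap - AffineMap.const ℝ _ y)
    (B.mulVecLin.toAffineMap - AffineMap.const ℝ _ (B *ᵥ v))
    (by simpa using h.mul_norm2sq_mulVec_le)).congr fun x _ => ?_
  simp only [AffineMap.coe_sub, LinearMap.coe_toAffineMap, AffineMap.coe_const, Pi.sub_apply,
    mulVecLin_apply, Function.const_apply, ← norm2sq_neg (y - A *ᵥ x), neg_sub, mulVec_sub]

lemma convexOn_sub_ciInf {ι E : Type*} [Nonempty ι] [AddCommMonoid E] [Module ℝ E] {s : Set E}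
    {h : E → ℝ} {k : ι → E → ℝ} (hk : ∀ i, ConvexOn ℝ s fun x => h x - k i x)
    (hbdd : ∀ x ∈ s, BddBelow (range fun i => k i x)) :
    ConvexOn ℝ s fun x => h x - ⨅ i, k i x := by
  refine ⟨(hk (Classical.arbitrary ι)).1, fun x hx x' hx' a b ha hb hab => ?_⟩
  simp only [smul_eq_mul]
  suffices h (a • x + b • x') - (a * (h x - ⨅ i, k i x) + b * (h x' - ⨅ i, k i x'))
      ≤ ⨅ i, k i (a • x + b • x') by linarith
  refine le_ciInf fun i => ?_
  have hconv := (hk i).2 hx hx' ha hb hab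
  have hx_inf := mul_le_mul_of_nonneg_left (ciInf_le (hbdd x hx) i) ha
  have hx'_inf := mul_le_mul_of_nonneg_left (ciInf_le (hbdd x' hx') i) hb
  simp only [smul_eq_mul] at hconv
  linarith

/-- If `AᵀA - λ BᵀB` is positive semidefinite, then the GMC-regularized least squares
cost function `F(x) = (1/2)‖y - Ax‖₂² + λ ψ_B(x)` is convex. -/
theorem gmc_costFunction_convex {M M' N : ℕ} (y : Fin M → ℝ)
    (A : Matrix (Fin M) (Fin N) ℝ) (lam : ℝ) (hlam : 0 < lam)
    (B : Matrix (Fin M') (Fin N) ℝ)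
    (h : (Aᵀ * A - lam • (Bᵀ * B)).PosSemidef) :
    ConvexOn ℝ Set.univ
      (fun x : Fin N → ℝ => (1 / 2) * norm2sq (y - A.mulVec x) + lam * gmcPenalty B x) := by
  have hF : (fun x : Fin N → ℝ => (1 / 2) * norm2sq (y - A *ᵥ x) + lam * gmcPenalty B x) =
      fun x => ((1 / 2) * norm2sq (y - A *ᵥ x) + lam * norm1 x) -
        ⨅ v, lam * (norm1 v + (1 / 2) * norm2sq (B *ᵥ (x - v))) := by
    funext x
    rw [gmcPenalty, genHuber, mul_sub, Real.mul_iInf_of_nonneg hlam.le]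
    ring
  rw [hF]
  refine convexOn_sub_ciInf (fun v => ?_) fun x _ => ⟨0, ?_⟩
  · have hquad := (h.convexOn_norm2sq_sub_mul_norm2sq_mulVec y v).smul
      (by norm_num : (0 : ℝ) ≤ 1 / 2)
    refine ((hquad.add (convexOn_norm1.smul hlam.le)).add_const (-(lam * norm1 v))).congr
      fun x _ => ?_
    simp only [smul_eq_mul, Pi.add_apply]
    ring
  · rintro _ ⟨v, rfl⟩
    exact mul_nonneg hlam.le (add_nonneg (norm1_nonneg v)
      (mul_nonneg (by norm_num) (norm2sq_nonneg _)))
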